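/- Perturbation bound along the gradient ray: let K ∈ S with Y ≻ 0 solving A_K Y A_Kᵀ + Σ = Y (Σ ≻ 0), let N = RK − Bᵀ X A_K, and for η ≥ 0 set K_η = K − 2η N Y. Suppose A_η := A − B K_η is Schur for all η in [0, η₀], where η₀ = (√(μ₁ + μ₂²) − μ₂)/(4μ₁) with μ₁ = ‖Y‖₂‖B N Y‖₂²/λ₁(Σ) and μ₂ = ‖Y‖₂‖B N Y‖₂‖A_K‖₂/λ₁(Σ). Then for every η ≤ η₀, the solution Y_η of A_η Y_η A_ηᵀ + Σ = Y_η satisfies ‖Y_η‖₂ ≤ β₀‖Y‖₂ with β₀ = 1/(1 − 4μ₁η₀² − 4μ₂η₀) > 0. -/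

import Mathlib

open Matrix
open scoped ENNReal

/-- Spectral radius of a real square matrix, computed over ℂ. -/
noncomputable def specRad {n : ℕ} (A : Matrix (Fin n) (Fin n) ℝ) : ℝ≥0∞ :=
  spectralRadius ℂ (A.map Complex.ofReal)

/-- A real square matrix is Schur stable if its spectral radius is `< 1`. -/
def IsSchur {n : ℕ} (A : Matrix (Fin n) (Fin n) ℝ) : Prop := specRad A < 1

/-- The spectral (ℓ²-operator) norm of a real matrix. -/
noncomputable def spec2 {p q : ℕ} (M : Matrix (Fin p) (Fin q) ℝ) : ℝ :=
  ‖LinearMap.toContinuousLinearMap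
    ((Matrix.toEuclideanLin M : EuclideanSpace ℝ (Fin q) →ₗ[ℝ] EuclideanSpace ℝ (Fin p)))‖

/-!
A Lyapunov equation `Z = A Z Aᵀ + M` with `A` Schur and `M ≽ 0` has `Z ≽ 0`, because
`xᵀ Z x ≥ ((Aʲ)ᵀ x)ᵀ Z ((Aʲ)ᵀ x) → 0`. Write `A_η = A_K + 2η G` with `G = BNY`. The perturbation
`A_η Y_η A_ηᵀ − A_K Y_η A_Kᵀ` has norm at most `(4η‖A_K‖‖G‖ + 4η²‖G‖²)‖Y_η‖ = t λ₁(Σ)`, so it is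
dominated by `tΣ`, and comparing the Lyapunov equations of `Y_η` and `Y` for `A_K` gives
`Y_η ≼ (1 + t) Y`. Hence `‖Y_η‖ ≤ ‖Y‖ + (4μ₁η² + 4μ₂η)‖Y_η‖`, and
`4μ₁η² + 4μ₂η ≤ 4μ₁η₀² + 4μ₂η₀ < 1`.
-/

open Filter Topology
open scoped Matrix.Norms.L2Operator

theorem spectrum.tendsto_pow_atTop_nhds_zero_of_spectralRadius_lt_one {A : Type*} [NormedRing A]
    [NormedAlgebra ℂ A] [CompleteSpace A] {a : A} (ha : spectralRadius ℂ a < 1) :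
    Tendsto (a ^ ·) atTop (𝓝 0) := by
  obtain ⟨r, hρr, hr1⟩ := exists_between ha
  lift r to NNReal using (hr1.trans ENNReal.one_lt_top).ne
  have hev : ∀ᶠ j : ℕ in atTop, ‖a ^ j‖₊ ≤ r ^ j := by
    filter_upwards [(pow_nnnorm_pow_one_div_tendsto_nhds_spectralRadius a).eventually_lt_const hρr,
      eventually_ge_atTop 1] with j hj hj1
    have := ENNReal.rpow_le_rpow hj.le (by positivity : (0 : ℝ) ≤ j)
    rw [← ENNReal.rpow_mul, one_div_mul_cancel (by positivity), ENNReal.rpow_one,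
      ENNReal.rpow_natCast] at this
    exact_mod_cast this
  refine squeeze_zero_norm' ?_ (tendsto_pow_atTop_nhds_zero_of_lt_one r.2 (by exact_mod_cast hr1))
  filter_upwards [hev] with j hj
  exact_mod_cast hj

theorem IsSchur.tendsto_pow_atTop_nhds_zero {k : ℕ} {A : Matrix (Fin k) (Fin k) ℝ}
    (hA : IsSchur A) : Tendsto (A ^ ·) atTop (𝓝 0) := by
  have hre : Continuous fun M : Matrix (Fin k) (Fin k) ℂ => M.map Complex.re :=
    continuous_id.matrix_map Complex.continuous_re
  convert (hre.tendsto 0).comp (spectrum.tendsto_pow_atTop_nhds_zero_of_spectralRadius_lt_one hA)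
    using 2 with j
  · change A ^ j = ((Complex.ofRealHom.mapMatrix A) ^ j).map Complex.re
    rw [← map_pow, RingHom.mapMatrix_apply, Matrix.map_map]
    ext i l
    simp
  · simp

theorem Matrix.dotProduct_mul_mul_transpose_mulVec {R m n : Type*} [CommSemiring R] [Fintype m]
    [Fintype n] (A : Matrix n m R) (D : Matrix m m R) (x : n → R) :
    x ⬝ᵥ ((A * D * Aᵀ) *ᵥ x) = (Aᵀ *ᵥ x) ⬝ᵥ (D *ᵥ (Aᵀ *ᵥ x)) := by
  rw [← mulVec_mulVec, ← mulVec_mulVec, dotProduct_mulVec, ← mulVec_transpose]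

theorem IsSchur.dotProduct_mulVec_nonneg_of_lyapunov {k : ℕ} {A D M : Matrix (Fin k) (Fin k) ℝ}
    (hA : IsSchur A) (hD : A * D * Aᵀ + M = D) (hM : ∀ x, 0 ≤ x ⬝ᵥ (M *ᵥ x)) (x : Fin k → ℝ) :
    0 ≤ x ⬝ᵥ (D *ᵥ x) := by
  set q : (Fin k → ℝ) → ℝ := fun v => v ⬝ᵥ (D *ᵥ v)
  have hstep (v : Fin k → ℝ) : q (Aᵀ *ᵥ v) ≤ q v := by
    have : q v = q (Aᵀ *ᵥ v) + v ⬝ᵥ (M *ᵥ v) := by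
      simp only [q]
      conv_lhs => rw [← hD]
      rw [Matrix.add_mulVec, dotProduct_add, Matrix.dotProduct_mul_mul_transpose_mulVec]
    linarith [hM v]
  have hiter (j : ℕ) : q ((A ^ j)ᵀ *ᵥ x) ≤ q x := by
    induction j with
    | zero => simp
    | succ j ih =>
      rw [pow_succ, Matrix.transpose_mul, ← Matrix.mulVec_mulVec]
      exact (hstep _).trans ih
  have hcont : Continuous fun P : Matrix (Fin k) (Fin k) ℝ => q (Pᵀ *ᵥ x) := by
    simp only [q]
    fun_prop
  have hlim := (hcont.tendsto 0).comp hA.tendsto_pow_atTop_nhds_zero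
  simp only [Matrix.transpose_zero, Matrix.zero_mulVec, q, zero_dotProduct] at hlim
  exact le_of_tendsto hlim (Eventually.of_forall hiter)

theorem IsSchur.dotProduct_mulVec_le_of_lyapunov {k : ℕ} {A A' S Y Z : Matrix (Fin k) (Fin k) ℝ}
    {t : ℝ} (hA : IsSchur A) (hY : A * Y * Aᵀ + S = Y) (hZ : A' * Z * A'ᵀ + S = Z)
    (hP : ∀ x, x ⬝ᵥ ((A' * Z * A'ᵀ - A * Z * Aᵀ) *ᵥ x) ≤ t * (x ⬝ᵥ (S *ᵥ x))) (x : Fin k → ℝ) :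
    x ⬝ᵥ (Z *ᵥ x) ≤ (1 + t) * (x ⬝ᵥ (Y *ᵥ x)) := by
  have hW : A * ((1 + t) • Y - Z) * Aᵀ + (t • S - (A' * Z * A'ᵀ - A * Z * Aᵀ)) =
      (1 + t) • Y - Z := by
    rw [Matrix.mul_sub, Matrix.sub_mul, Matrix.mul_smul, Matrix.smul_mul, eq_sub_of_add_eq hY,
      eq_sub_of_add_eq hZ]
    module
  have := hA.dotProduct_mulVec_nonneg_of_lyapunov hW (fun v => ?_) x
  · simp only [Matrix.sub_mulVec, Matrix.smul_mulVec, dotProduct_sub, dotProduct_smul,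
      smul_eq_mul] at this
    linarith
  · rw [Matrix.sub_mulVec, Matrix.smul_mulVec, dotProduct_sub, dotProduct_smul, smul_eq_mul]
    linarith [hP v]

namespace Matrix

section L2OpNorm

open scoped MatrixOrder

variable {m n : Type*} [Fintype m] [Fintype n] [DecidableEq m] [DecidableEq n]

theorem dotProduct_mulVec_le_l2_opNorm_mul (M : Matrix n n ℝ) (x : n → ℝ) :
    x ⬝ᵥ (M *ᵥ x) ≤ ‖M‖ * (x ⬝ᵥ x) := by
  set v : EuclideanSpace ℝ n := WithLp.toLp 2 x
  have hv : ‖v‖ ^ 2 = x ⬝ᵥ x := by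
    rw [EuclideanSpace.norm_sq_eq]
    simp [v, dotProduct, sq]
  calc x ⬝ᵥ (M *ᵥ x) = inner ℝ v (toEuclideanCLM (𝕜 := ℝ) M v) := by
        simp [v, EuclideanSpace.inner_eq_star_dotProduct, dotProduct_comm]
    _ ≤ ‖v‖ * ‖toEuclideanCLM (𝕜 := ℝ) M v‖ := real_inner_le_norm _ _
    _ ≤ ‖v‖ * (‖M‖ * ‖v‖) := by gcongr; exact (toEuclideanCLM (𝕜 := ℝ) M).le_opNorm v
    _ = ‖M‖ * (x ⬝ᵥ x) := by rw [← hv]; ring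

theorem IsHermitian.iInf_eigenvalues_mul_dotProduct_le {S : Matrix n n ℝ} (hS : S.IsHermitian)
    (x : n → ℝ) : (⨅ i, hS.eigenvalues i) * (x ⬝ᵥ x) ≤ x ⬝ᵥ (S *ᵥ x) := by
  have hle : algebraMap ℝ (Matrix n n ℝ) (⨅ i, hS.eigenvalues i) ≤ S := by
    refine algebraMap_le_of_le_spectrum (fun r hr => ?_) hS.isSelfAdjoint
    rw [hS.spectrum_real_eq_range_eigenvalues] at hr
    obtain ⟨i, rfl⟩ := hr
    exact ciInf_le (Set.finite_range _).bddBelow i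
  have := (le_iff.mp hle).dotProduct_mulVec_nonneg x
  simp only [star_trivial, Algebra.algebraMap_eq_smul_one, sub_mulVec, smul_mulVec, one_mulVec,
    dotProduct_sub, dotProduct_smul, smul_eq_mul] at this
  linarith

theorem PosSemidef.l2_opNorm_le_of_dotProduct_mulVec_le {P : Matrix n n ℝ} (hP : P.PosSemidef)
    {c : ℝ} (hc : 0 ≤ c) (h : ∀ x, x ⬝ᵥ (P *ᵥ x) ≤ c * (x ⬝ᵥ x)) : ‖P‖ ≤ c := by
  have hle : P ≤ algebraMap ℝ (Matrix n n ℝ) c := by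
    refine le_iff.mpr (.of_dotProduct_mulVec_nonneg ?_ fun x => ?_)
    · rw [Algebra.algebraMap_eq_smul_one]
      exact (isHermitian_one.smul (IsSelfAdjoint.all c)).sub hP.isHermitian
    · simp only [star_trivial, Algebra.algebraMap_eq_smul_one, sub_mulVec, smul_mulVec,
        one_mulVec, dotProduct_sub, dotProduct_smul, smul_eq_mul]
      linarith [h x]
  rw [← cfc_id' ℝ P]
  refine norm_cfc_le hc fun r hr => ?_
  rw [Real.norm_eq_abs, abs_le]
  exact ⟨by linarith [spectrum_nonneg_of_nonneg hP.nonneg hr],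
    (le_algebraMap_iff_spectrum_le hP.isHermitian.isSelfAdjoint).mp hle r hr⟩

theorem l2_opNorm_transpose (M : Matrix n m ℝ) : ‖Mᵀ‖ = ‖M‖ := by
  rw [← conjTranspose_eq_transpose_of_trivial, l2_opNorm_conjTranspose]

theorem l2_opNorm_mul_mul_transpose_le (M M' : Matrix n m ℝ) (Z : Matrix m m ℝ) :
    ‖M * Z * M'ᵀ‖ ≤ ‖M‖ * ‖Z‖ * ‖M'‖ := by
  grw [l2_opNorm_mul, l2_opNorm_mul, l2_opNorm_transpose]

theorem l2_opNorm_conj_add_smul_sub_le (A G : Matrix n m ℝ) (Z : Matrix m m ℝ) (s : ℝ) :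
    ‖(A + s • G) * Z * (A + s • G)ᵀ - A * Z * Aᵀ‖ ≤
      (2 * |s| * ‖A‖ * ‖G‖ + s ^ 2 * ‖G‖ ^ 2) * ‖Z‖ := by
  have hexp : (A + s • G) * Z * (A + s • G)ᵀ - A * Z * Aᵀ =
      s • (A * Z * Gᵀ + G * Z * Aᵀ) + s ^ 2 • (G * Z * Gᵀ) := by
    simp only [transpose_add, transpose_smul, Matrix.add_mul, Matrix.mul_add, Matrix.smul_mul,
      Matrix.mul_smul]
    module
  rw [hexp]
  grw [norm_add_le, norm_smul, norm_smul, norm_add_le, l2_opNorm_mul_mul_transpose_le,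
    l2_opNorm_mul_mul_transpose_le, l2_opNorm_mul_mul_transpose_le, Real.norm_eq_abs,
    Real.norm_eq_abs, abs_pow, sq_abs]
  exact le_of_eq (by ring)

end L2OpNorm

end Matrix

theorem IsSchur.l2_opNorm_le_of_lyapunov_perturbation {k : ℕ}
    {A G S Y Z : Matrix (Fin k) (Fin k) ℝ} {s lam : ℝ} (hA : IsSchur A)
    (hAs : IsSchur (A + s • G)) (hlam : 0 < lam) (hS : ∀ x, lam * (x ⬝ᵥ x) ≤ x ⬝ᵥ (S *ᵥ x))
    (hY : A * Y * Aᵀ + S = Y) (hZsymm : Zᵀ = Z) (hZ : (A + s • G) * Z * (A + s • G)ᵀ + S = Z) :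
    ‖Z‖ ≤ ‖Y‖ + (2 * |s| * ‖A‖ * ‖G‖ + s ^ 2 * ‖G‖ ^ 2) * ‖Z‖ * ‖Y‖ / lam := by
  have hdot (v : Fin k → ℝ) : 0 ≤ v ⬝ᵥ v := by simpa using dotProduct_star_self_nonneg v
  set t := (2 * |s| * ‖A‖ * ‖G‖ + s ^ 2 * ‖G‖ ^ 2) * ‖Z‖ / lam
  have hZpos : Z.PosSemidef := by
    refine .of_dotProduct_mulVec_nonneg (by simpa [Matrix.IsHermitian] using hZsymm) fun x => ?_
    refine star_trivial x ▸ hAs.dotProduct_mulVec_nonneg_of_lyapunov hZ (fun v => ?_) x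
    exact (mul_nonneg hlam.le (hdot v)).trans (hS v)
  have hP (x : Fin k → ℝ) :
      x ⬝ᵥ (((A + s • G) * Z * (A + s • G)ᵀ - A * Z * Aᵀ) *ᵥ x) ≤ t * (x ⬝ᵥ (S *ᵥ x)) := by
    have htlam : t * lam = (2 * |s| * ‖A‖ * ‖G‖ + s ^ 2 * ‖G‖ ^ 2) * ‖Z‖ := by
      simp only [t]
      field_simp
    grw [Matrix.dotProduct_mulVec_le_l2_opNorm_mul, Matrix.l2_opNorm_conj_add_smul_sub_le, ← hS x,
      ← mul_assoc, htlam]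
    exact hdot x
  have hZY (x : Fin k → ℝ) : x ⬝ᵥ (Z *ᵥ x) ≤ ((1 + t) * ‖Y‖) * (x ⬝ᵥ x) := by
    grw [hA.dotProduct_mulVec_le_of_lyapunov hY hZ hP x, Matrix.dotProduct_mulVec_le_l2_opNorm_mul,
      mul_assoc]
  calc ‖Z‖ ≤ (1 + t) * ‖Y‖ := hZpos.l2_opNorm_le_of_dotProduct_mulVec_le (by positivity) hZY
    _ = _ := by simp only [t]; ring

theorem nonneg_and_four_mul_sq_add_four_mul_lt_one {μ1 μ2 η0 : ℝ} (hμ1 : 0 ≤ μ1) (hμ2 : 0 ≤ μ2)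
    (hη0 : η0 = (√(μ1 + μ2 ^ 2) - μ2) / (4 * μ1)) :
    0 ≤ η0 ∧ 4 * μ1 * η0 ^ 2 + 4 * μ2 * η0 < 1 := by
  rcases hμ1.eq_or_lt with rfl | hμ1
  · -- `η0 = 0` here, by the convention `x / 0 = 0`
    simp [hη0]
  set r := √(μ1 + μ2 ^ 2)
  have hr : r ^ 2 = μ1 + μ2 ^ 2 := Real.sq_sqrt (by positivity)
  have hμ2r : μ2 ≤ r := Real.le_sqrt_of_sq_le (by linarith)
  have h4η0 : 4 * μ1 * η0 = r - μ2 := by rw [hη0]; field_simp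
  refine ⟨hη0 ▸ by positivity, ?_⟩
  nlinarith [Real.sqrt_nonneg (μ1 + μ2 ^ 2)]

theorem spec2_eq_l2_opNorm {p q : ℕ} (M : Matrix (Fin p) (Fin q) ℝ) : spec2 M = ‖M‖ := rfl

theorem stmt17_general {n m : ℕ} (A : Matrix (Fin n) (Fin n) ℝ) (B : Matrix (Fin n) (Fin m) ℝ)
    (Sig : Matrix (Fin n) (Fin n) ℝ) (hSig : Sig.PosDef)
    (K : Matrix (Fin m) (Fin n) ℝ) (Y : Matrix (Fin n) (Fin n) ℝ) (hS : IsSchur (A - B * K))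
    (hY : (A - B * K) * Y * (A - B * K)ᵀ + Sig = Y) (N : Matrix (Fin m) (Fin n) ℝ)
    (μ1 μ2 η0 β0 : ℝ)
    (hμ1 : μ1 = spec2 Y * spec2 (B * N * Y) ^ 2 / (⨅ i, hSig.1.eigenvalues i))
    (hμ2 : μ2 = spec2 Y * spec2 (B * N * Y) * spec2 (A - B * K) / (⨅ i, hSig.1.eigenvalues i))
    (hη0 : η0 = (Real.sqrt (μ1 + μ2 ^ 2) - μ2) / (4 * μ1))
    (hβ0 : β0 = 1 / (1 - 4 * μ1 * η0 ^ 2 - 4 * μ2 * η0))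
    (hSchur : ∀ η : ℝ, 0 ≤ η → η ≤ η0 → IsSchur (A - B * (K - (2 * η) • (N * Y)))) :
    0 < β0 ∧
    ∀ η : ℝ, 0 ≤ η → η ≤ η0 →
      ∀ Yη : Matrix (Fin n) (Fin n) ℝ, Yηᵀ = Yη →
        (A - B * (K - (2 * η) • (N * Y))) * Yη * (A - B * (K - (2 * η) • (N * Y)))ᵀ + Sig = Yη →
        spec2 Yη ≤ β0 * spec2 Y := by
  simp only [spec2_eq_l2_opNorm] at hμ1 hμ2 ⊢
  set lam := ⨅ i, hSig.1.eigenvalues i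
  have hlam : 0 ≤ lam := Real.iInf_nonneg fun i => (hSig.eigenvalues_pos i).le
  have hμ1' : 0 ≤ μ1 := hμ1 ▸ by positivity
  have hμ2' : 0 ≤ μ2 := hμ2 ▸ by positivity
  obtain ⟨-, hc0⟩ := nonneg_and_four_mul_sq_add_four_mul_lt_one hμ1' hμ2' hη0
  refine ⟨hβ0 ▸ one_div_pos.mpr (by linarith), fun η hη hηη0 Yη hYηsymm hYη => ?_⟩
  rcases isEmpty_or_nonempty (Fin n) with hn | hn
  · simp [Subsingleton.elim Yη 0, Subsingleton.elim Y 0]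
  have hlam_pos : 0 < lam := by
    obtain ⟨i, hi⟩ := exists_eq_ciInf_of_finite (f := hSig.1.eigenvalues)
    exact (hSig.eigenvalues_pos i).trans_eq hi
  have hAη : A - B * (K - (2 * η) • (N * Y)) = (A - B * K) + (2 * η) • (B * N * Y) := by
    rw [Matrix.mul_sub, Matrix.mul_smul, ← Matrix.mul_assoc]
    abel
  rw [hAη] at hYη
  have key := hS.l2_opNorm_le_of_lyapunov_perturbation (hAη ▸ hSchur η hη hηη0) hlam_pos
    hSig.1.iInf_eigenvalues_mul_dotProduct_le hY hYηsymm hYη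
  have hc : (2 * |2 * η| * ‖A - B * K‖ * ‖B * N * Y‖ + (2 * η) ^ 2 * ‖B * N * Y‖ ^ 2) * ‖Yη‖ *
      ‖Y‖ / lam = (4 * μ1 * η ^ 2 + 4 * μ2 * η) * ‖Yη‖ := by
    rw [hμ1, hμ2, abs_of_nonneg (by positivity)]
    field_simp
    ring
  have hcη : 4 * μ1 * η ^ 2 + 4 * μ2 * η ≤ 4 * μ1 * η0 ^ 2 + 4 * μ2 * η0 := by gcongr
  rw [hβ0, one_div_mul_eq_div, le_div_iff₀ (by linarith)]
  nlinarith [norm_nonneg Yη]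

/-- Perturbation bound along the gradient ray: if `A − BK_η` is Schur for all
`η ∈ [0, η₀]`, then `‖Y_η‖₂ ≤ β₀‖Y‖₂` for all `η ≤ η₀`, with
`β₀ = 1/(1 − 4μ₁η₀² − 4μ₂η₀) > 0`. -/
theorem stmt17 {n m : ℕ} (A : Matrix (Fin n) (Fin n) ℝ) (B : Matrix (Fin n) (Fin m) ℝ)
    (Q : Matrix (Fin n) (Fin n) ℝ) (R : Matrix (Fin m) (Fin m) ℝ)
    (Sig : Matrix (Fin n) (Fin n) ℝ)
    (hQ : Qᵀ = Q) (hR : Rᵀ = R) (hSig : Sig.PosDef)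
    (K : Matrix (Fin m) (Fin n) ℝ) (X Y : Matrix (Fin n) (Fin n) ℝ)
    (hX : Xᵀ = X) (hS : IsSchur (A - B * K))
    (hLyap : (A - B * K)ᵀ * X * (A - B * K) + Q + Kᵀ * R * K = X)
    (hYpd : Y.PosDef) (hY : (A - B * K) * Y * (A - B * K)ᵀ + Sig = Y)
    (N : Matrix (Fin m) (Fin n) ℝ) (hN : N = R * K - Bᵀ * X * (A - B * K))
    (μ1 μ2 η0 β0 : ℝ)
    (hμ1 : μ1 = spec2 Y * spec2 (B * N * Y) ^ 2 / (⨅ i, hSig.1.eigenvalues i))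
    (hμ2 : μ2 = spec2 Y * spec2 (B * N * Y) * spec2 (A - B * K) / (⨅ i, hSig.1.eigenvalues i))
    (hη0 : η0 = (Real.sqrt (μ1 + μ2 ^ 2) - μ2) / (4 * μ1))
    (hβ0 : β0 = 1 / (1 - 4 * μ1 * η0 ^ 2 - 4 * μ2 * η0))
    (hSchur : ∀ η : ℝ, 0 ≤ η → η ≤ η0 → IsSchur (A - B * (K - (2 * η) • (N * Y)))) :
    0 < β0 ∧
    ∀ η : ℝ, 0 ≤ η → η ≤ η0 →
      ∀ Yη : Matrix (Fin n) (Fin n) ℝ, Yηᵀ = Yη →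
        (A - B * (K - (2 * η) • (N * Y))) * Yη * (A - B * (K - (2 * η) • (N * Y)))ᵀ + Sig = Yη →
        spec2 Yη ≤ β0 * spec2 Y :=
  stmt17_general A B Sig hSig K Y hS hY N μ1 μ2 η0 β0 hμ1 hμ2 hη0 hβ0 hSchur
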